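/- arXiv:1904.03614 — 4 statements merged into one kernel-verified Lean document; each statement's English description precedes it below -/
import Mathlib

section
/- The cosine trinomial $T(t) = 1 + \frac{16}{15}\cos t + \frac{1}{15}\cos(4t)$ is nonnegative for every real $t$, and $T(0) = 2 + \frac{2}{15} > 2$. -/
/-! With `c = cos t` and `cos 4t = 8c⁴ - 8c² + 1` the trinomial factors as
`(8/15) (1 + c) (2 - c² (1 - c))`, and on `[-1, 1]` both factors are nonnegative since
`c² ≤ 1` and `1 - c ≤ 2`. -/

open Real

lemma Real.cos_four_mul (x : ℝ) : cos (4 * x) = 8 * cos x ^ 4 - 8 * cos x ^ 2 + 1 := by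
  rw [show 4 * x = 2 * (2 * x) by ring, cos_two_mul, cos_two_mul]
  ring

lemma trinomial_eq_mul (t : ℝ) :
    1 + (16 / 15) * cos t + (1 / 15) * cos (4 * t) =
      8 / 15 * (1 + cos t) * (2 - cos t ^ 2 * (1 - cos t)) := by
  rw [cos_four_mul]
  ring

lemma sq_mul_one_sub_le_two {c : ℝ} (h₁ : -1 ≤ c) (h₂ : c ≤ 1) : c ^ 2 * (1 - c) ≤ 2 := by
  have hsq : c ^ 2 ≤ 1 := by nlinarith
  calc c ^ 2 * (1 - c) ≤ 1 * 2 := by gcongr; linarith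
    _ = 2 := by norm_num

lemma trinomial_nonneg (t : ℝ) : 0 ≤ 1 + (16 / 15) * cos t + (1 / 15) * cos (4 * t) := by
  rw [trinomial_eq_mul]
  have h := sq_mul_one_sub_le_two (neg_one_le_cos t) (cos_le_one t)
  exact mul_nonneg (mul_nonneg (by norm_num) (by linarith [neg_one_le_cos t])) (by linarith)

theorem stmt_10 :
    (∀ t : ℝ, 0 ≤ 1 + (16 / 15) * Real.cos t + (1 / 15) * Real.cos (4 * t)) ∧
    1 + (16 / 15) * Real.cos 0 + (1 / 15) * Real.cos (4 * 0) = 2 + 2 / 15 ∧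
    (2 : ℝ) + 2 / 15 > 2 :=
  ⟨trinomial_nonneg, by norm_num, by norm_num⟩
end

section
/- Let $Q = (-5,-3) \cup (-2,2) \cup (3,5) \subset \mathbb{R}$ and let $L \subset \mathbb{R}$ be a set with $0 \in L$ and $(L - L) \cap Q = \{0\}$. Then for every $n \in \mathbb{N}$, the number of points of $L$ in the interval $[-5n, 5n]$ is at most $4n + 1$. -/
/-!
Two points of `L` are at distance at least `2` (because `(-2, 2)` is forbidden), so three points
`x < y < z` of `L` span at least `4`, hence at least `5` (because `(3, 5)` is forbidden). Thus a
half-open interval of length `5` holds at most two points of `L`. Covering `[-5n, 5n]` by `{0}` and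
`2n` such intervals gives the bound `4n + 1`.
-/

open Pointwise Set

theorem encard_le_two_of_not_lt_lt {α : Type*} [LinearOrder α] {s : Set α}
    (h : ∀ x ∈ s, ∀ y ∈ s, ∀ z ∈ s, x < y → ¬y < z) : s.encard ≤ 2 := by
  by_contra! hs
  obtain ⟨t, hts, ht⟩ := exists_subset_encard_eq (Order.add_one_le_of_lt hs)
  obtain ⟨x, y, z, hxy, hxz, hyz, rfl⟩ := encard_eq_three.mp ht
  simp only [insert_subset_iff, singleton_subset_iff] at hts
  obtain ⟨hx, hy, hz⟩ := hts
  rcases hxy.lt_or_gt with hxy | hxy <;> rcases hyz.lt_or_gt with hyz | hyz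
  · exact h x hx y hy z hz hxy hyz
  · rcases hxz.lt_or_gt with hxz | hxz
    · exact h x hx z hz y hy hxz hyz
    · exact h z hz x hx y hy hxz hxy
  · rcases hxz.lt_or_gt with hxz | hxz
    · exact h y hy x hx z hz hxy hxz
    · exact h y hy z hz x hx hyz hxz
  · exact h z hz y hy x hx hyz hxy

theorem eq_of_sub_mem_of_sub_inter_subset {G : Type*} [AddGroup G] {L Q : Set G}
    (hL : (L - L) ∩ Q ⊆ {0}) {x y : G} (hx : x ∈ L) (hy : y ∈ L) (hxy : x - y ∈ Q) :
    x = y :=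
  sub_eq_zero.mp (hL ⟨sub_mem_sub hx hy, hxy⟩)

section Packing

variable {L : Set ℝ} (hL : (L - L) ∩ (Ioo (-5) (-3) ∪ Ioo (-2) 2 ∪ Ioo 3 5) ⊆ {0})
include hL

theorem two_le_sub_of_lt {x y : ℝ} (hx : x ∈ L) (hy : y ∈ L) (hxy : x < y) : 2 ≤ y - x := by
  by_contra! h
  exact hxy.ne' <| eq_of_sub_mem_of_sub_inter_subset hL hy hx <|
    Or.inl <| Or.inr ⟨by linarith, h⟩

theorem five_le_sub_of_lt_of_lt {x y z : ℝ} (hx : x ∈ L) (hy : y ∈ L) (hz : z ∈ L)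
    (hxy : x < y) (hyz : y < z) : 5 ≤ z - x := by
  have h₁ := two_le_sub_of_lt hL hx hy hxy
  have h₂ := two_le_sub_of_lt hL hy hz hyz
  by_contra! h
  exact (hxy.trans hyz).ne' <| eq_of_sub_mem_of_sub_inter_subset hL hz hx <|
    Or.inr ⟨by linarith, h⟩

end Packing

section ThreePoint

variable {S : Set ℝ} (hS : ∀ x ∈ S, ∀ y ∈ S, ∀ z ∈ S, x < y → y < z → 5 ≤ z - x)
include hS

theorem encard_inter_le_two {I : Set ℝ} (hI : ∀ a ∈ I, ∀ b ∈ I, a - b < 5) :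
    (S ∩ I).encard ≤ 2 :=
  encard_le_two_of_not_lt_lt fun x hx y hy z hz hxy hyz =>
    (hI z hz.2 x hx.2).not_ge (hS x hx.1 y hy.1 z hz.1 hxy hyz)

theorem encard_inter_Icc_le (n : ℕ) :
    (S ∩ Icc (-(5 * (n : ℝ))) (5 * n)).encard ≤ 4 * n + 1 := by
  induction n with
  | zero =>
    refine (encard_le_encard fun x hx => ?_).trans (encard_singleton (0 : ℝ)).le
    simp only [CharP.cast_eq_zero, mul_zero, neg_zero, Icc_self, mem_inter_iff] at hx
    exact hx.2
  | succ n ih =>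
    have hcover : Icc (-(5 * ((n + 1 : ℕ) : ℝ))) (5 * (n + 1 : ℕ)) ⊆
        Icc (-(5 * (n : ℝ))) (5 * n) ∪ Ico (-(5 * ((n : ℝ) + 1))) (-(5 * n)) ∪
          Ioc (5 * (n : ℝ)) (5 * (n + 1)) := by
      intro x ⟨hx₁, hx₂⟩
      push_cast at hx₁ hx₂
      simp only [mem_union, mem_Icc, mem_Ico, mem_Ioc]
      by_cases h : x < -(5 * n)
      · exact Or.inl (Or.inr ⟨by linarith, h⟩)
      by_cases h' : 5 * n < x
      · exact Or.inr ⟨h', by linarith⟩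
      · exact Or.inl (Or.inl ⟨by linarith, by linarith⟩)
    have hleft := encard_inter_le_two hS (I := Ico (-(5 * ((n : ℝ) + 1))) (-(5 * n)))
      fun a ha b hb => by linarith [ha.1, ha.2, hb.1, hb.2]
    have hright := encard_inter_le_two hS (I := Ioc (5 * (n : ℝ)) (5 * (n + 1)))
      fun a ha b hb => by linarith [ha.1, ha.2, hb.1, hb.2]
    calc (S ∩ Icc (-(5 * ((n + 1 : ℕ) : ℝ))) (5 * (n + 1 : ℕ))).encard
      _ ≤ (S ∩ Icc (-(5 * (n : ℝ))) (5 * n)).encard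
          + (S ∩ Ico (-(5 * ((n : ℝ) + 1))) (-(5 * n))).encard
          + (S ∩ Ioc (5 * (n : ℝ)) (5 * (n + 1))).encard := by
        grw [inter_subset_inter_right S hcover, inter_union_distrib_left,
          inter_union_distrib_left, encard_union_le, encard_union_le]
      _ ≤ 4 * n + 1 + 2 + 2 := by gcongr
      _ = 4 * (n + 1 : ℕ) + 1 := by push_cast; ring

end ThreePoint

theorem stmt_12_general (L : Set ℝ)
    (hpack : (L - L) ∩ (Set.Ioo (-5 : ℝ) (-3) ∪ Set.Ioo (-2 : ℝ) 2 ∪ Set.Ioo (3 : ℝ) 5)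
      = {0}) :
    ∀ n : ℕ, (L ∩ Set.Icc (-(5 * (n : ℝ))) (5 * (n : ℝ))).Finite ∧
      (L ∩ Set.Icc (-(5 * (n : ℝ))) (5 * (n : ℝ))).ncard ≤ 4 * n + 1 := by
  intro n
  rw [← encard_le_coe_iff_finite_ncard_le]
  exact_mod_cast encard_inter_Icc_le
    (fun x hx y hy z hz => five_le_sub_of_lt_of_lt hpack.subset hx hy hz) n

theorem stmt_12 (L : Set ℝ) (h0 : (0 : ℝ) ∈ L)
    (hpack : (L - L) ∩ (Set.Ioo (-5 : ℝ) (-3) ∪ Set.Ioo (-2 : ℝ) 2 ∪ Set.Ioo (3 : ℝ) 5)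
      = {0}) :
    ∀ n : ℕ, (L ∩ Set.Icc (-(5 * (n : ℝ))) (5 * (n : ℝ))).Finite ∧
      (L ∩ Set.Icc (-(5 * (n : ℝ))) (5 * (n : ℝ))).ncard ≤ 4 * n + 1 :=
  stmt_12_general L hpack
end

section
/- Let $f : \mathbb{R} \to \mathbb{R}$ be a continuous positive definite function with compact support such that $f(0) = 1$ and $f(n) \le 0$ for all $n \in \mathbb{Z} \setminus \{0\}$. Then $\int_{\mathbb{R}} f(x)\, dx \le 1$. -/
open MeasureTheory ComplexOrder

def IsPosDefRFn {G : Type*} [AddCommGroup G] (f : G → ℝ) : Prop :=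
  ∀ (N : ℕ) (x : Fin N → G) (c : Fin N → ℂ),
    0 ≤ ∑ n : Fin N, ∑ m : Fin N, c n * (starRingEnd ℂ) (c m) * (f (x n - x m) : ℂ)

/-- Two-block positive-definiteness inequality: blocks `{0,…,N-1}` and `{x,…,x+N-1}`
with coefficients `1` and `-1`. -/
lemma pd_key (f : ℝ → ℝ) (hpd : IsPosDefRFn f) (N : ℕ) (x : ℝ) :
    0 ≤ ∑ j : Fin N, ∑ k : Fin N,
      (f ((j:ℝ) - (k:ℝ)) - f ((j:ℝ) - (x + (k:ℝ))) - f (x + (j:ℝ) - (k:ℝ))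
        + f (x + (j:ℝ) - (x + (k:ℝ)))) := by
  have h := hpd (N + N) (Fin.append (fun j : Fin N => (j:ℝ)) (fun j : Fin N => x + (j:ℝ)))
      (Fin.append (fun _ : Fin N => (1:ℂ)) (fun _ : Fin N => (-1:ℂ)))
  simp only [Fin.sum_univ_add, Fin.append_left, Fin.append_right, map_one, map_neg,
    one_mul, mul_one, neg_mul, mul_neg, neg_neg] at h
  rw [← Complex.zero_le_real]
  convert h using 1
  push_cast
  simp only [sub_eq_add_neg, Finset.sum_add_distrib, Finset.sum_neg_distrib]
  ring

lemma pd_intcomp (f : ℝ → ℝ) (hc : Continuous f) (a b : ℝ) :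
    (∫ x in (0:ℝ)..1, (f (a - b) - f (a - (x + b)) - f (x + a - b) + f (x + a - (x + b))))
      = 2 * f (a - b) - ∫ x in (a - b - 1)..(a - b + 1), f x := by
  have e1 : ∀ x : ℝ, a - (x + b) = (a - b) - x := fun x => by ring
  have e2 : ∀ x : ℝ, x + a - b = x + (a - b) := fun x => by ring
  have e3 : ∀ x : ℝ, x + a - (x + b) = a - b := fun x => by ring
  simp only [e1, e2, e3]
  have i1 : IntervalIntegrable (fun x => f ((a - b) - x)) volume 0 1 :=
    (hc.comp (by continuity)).intervalIntegrable _ _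
  have i2 : IntervalIntegrable (fun x => f (x + (a - b))) volume 0 1 :=
    (hc.comp (by continuity)).intervalIntegrable _ _
  have ic : IntervalIntegrable (fun _ : ℝ => f (a - b)) volume 0 1 := intervalIntegrable_const
  rw [intervalIntegral.integral_add ((ic.sub i1).sub i2) ic,
      intervalIntegral.integral_sub (ic.sub i1) i2,
      intervalIntegral.integral_sub ic i1,
      intervalIntegral.integral_comp_sub_left f (a - b),
      intervalIntegral.integral_comp_add_right f (a - b),
      intervalIntegral.integral_const]
  have adj : (∫ x in (a-b-1)..(a-b), f x) + ∫ x in (a-b)..(a-b+1), f x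
      = ∫ x in (a-b-1)..(a-b+1), f x :=
    intervalIntegral.integral_add_adjacent_intervals (hc.intervalIntegrable _ _)
      (hc.intervalIntegrable _ _)
  rw [← adj]
  norm_num
  ring

lemma pd_key2 (f : ℝ → ℝ) (hc : Continuous f) (hpd : IsPosDefRFn f) (N : ℕ) :
    0 ≤ ∑ j : Fin N, ∑ k : Fin N,
      (2 * f ((j:ℝ) - (k:ℝ)) - ∫ x in ((j:ℝ) - (k:ℝ) - 1)..((j:ℝ) - (k:ℝ) + 1), f x) := by
  have ibig : ∀ p : Fin N × Fin N, IntervalIntegrable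
      (fun x : ℝ => f ((p.1:ℝ) - (p.2:ℝ)) - f ((p.1:ℝ) - (x + (p.2:ℝ)))
        - f (x + (p.1:ℝ) - (p.2:ℝ)) + f (x + (p.1:ℝ) - (x + (p.2:ℝ)))) volume 0 1 := by
    intro p
    apply Continuous.intervalIntegrable
    continuity
  have h0 : 0 ≤ ∫ x in (0:ℝ)..1, ∑ p : Fin N × Fin N,
      (f ((p.1:ℝ) - (p.2:ℝ)) - f ((p.1:ℝ) - (x + (p.2:ℝ))) - f (x + (p.1:ℝ) - (p.2:ℝ))
        + f (x + (p.1:ℝ) - (x + (p.2:ℝ)))) := by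
    apply intervalIntegral.integral_nonneg (by norm_num)
    intro x _
    have := pd_key f hpd N x
    rwa [← Finset.sum_product' (f := fun (j k : Fin N) => f ((j:ℝ) - (k:ℝ)) - f ((j:ℝ) - (x + (k:ℝ)))
      - f (x + (j:ℝ) - (k:ℝ)) + f (x + (j:ℝ) - (x + (k:ℝ)))), Finset.univ_product_univ] at this
  rw [intervalIntegral.integral_finset_sum (fun p _ => ibig p)] at h0
  rw [← Finset.sum_product' (f := fun (j k : Fin N) => 2 * f ((j:ℝ) - (k:ℝ))
      - ∫ x in ((j:ℝ) - (k:ℝ) - 1)..((j:ℝ) - (k:ℝ) + 1), f x), Finset.univ_product_univ]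
  calc (0:ℝ) ≤ _ := h0
    _ = _ := Finset.sum_congr rfl fun p _ => pd_intcomp f hc _ _

lemma pd_diag (f : ℝ → ℝ) (hf0 : f 0 = 1) (hneg : ∀ n : ℤ, n ≠ 0 → f n ≤ 0) (N : ℕ) :
    ∑ j : Fin N, ∑ k : Fin N, f ((j:ℝ) - (k:ℝ)) ≤ N := by
  have inner : ∀ j : Fin N, ∑ k : Fin N, f ((j:ℝ) - (k:ℝ)) ≤ 1 := by
    intro j
    rw [← Finset.add_sum_erase _ _ (Finset.mem_univ j), sub_self, hf0]
    have h2 : ∑ k ∈ Finset.univ.erase j, f ((j:ℝ) - (k:ℝ)) ≤ 0 := by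
      apply Finset.sum_nonpos
      intro k hk
      have hkj : k ≠ j := Finset.ne_of_mem_erase hk
      have hne : (j.val : ℤ) - (k.val : ℤ) ≠ 0 := by
        rw [sub_ne_zero]
        have : j.val ≠ k.val := fun h => hkj (Fin.ext h.symm)
        exact_mod_cast this
      have := hneg _ hne
      push_cast at this
      exact this
    linarith
  calc ∑ j : Fin N, ∑ k : Fin N, f ((j:ℝ) - (k:ℝ)) ≤ ∑ _j : Fin N, (1:ℝ) :=
        Finset.sum_le_sum (fun j _ => inner j)
    _ = N := by simp

lemma pd_tel (f : ℝ → ℝ) (hc : Continuous f) (c : ℝ) (N : ℕ) :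
    ∑ k : Fin N, (∫ x in (c - (k:ℝ))..(c - (k:ℝ) + 1), f x)
      = ∫ x in (c - N + 1)..(c + 1), f x := by
  have key := intervalIntegral.sum_integral_adjacent_intervals
      (a := fun i : ℕ => c - N + 1 + i) (n := N) (f := f) (μ := volume)
      (fun i _ => hc.intervalIntegrable _ _)
  calc ∑ k : Fin N, (∫ x in (c - (k:ℝ))..(c - (k:ℝ) + 1), f x)
      = ∑ k ∈ Finset.range N, (∫ x in (c - (k:ℝ))..(c - (k:ℝ) + 1), f x) :=
        Fin.sum_univ_eq_sum_range (fun k : ℕ => ∫ x in (c - (k:ℝ))..(c - (k:ℝ) + 1), f x) N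
    _ = ∑ i ∈ Finset.range N, (∫ x in (c - ((N - 1 - i : ℕ):ℝ))..(c - ((N - 1 - i : ℕ):ℝ) + 1), f x) :=
        (Finset.sum_range_reflect _ N).symm
    _ = ∑ i ∈ Finset.range N, (∫ x in (c - N + 1 + (i:ℝ))..(c - N + 1 + ((i:ℝ) + 1)), f x) := by
        refine Finset.sum_congr rfl fun i hi => ?_
        have hi' : i < N := Finset.mem_range.mp hi
        have h1 : ((N - 1 - i : ℕ) : ℝ) = (N:ℝ) - 1 - i := by
          have h2 : N - 1 - i = N - (1 + i) := by omega
          rw [h2, Nat.cast_sub (by omega)]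
          push_cast; ring
        rw [h1]
        congr 1 <;> ring
    _ = ∫ x in (c - N + 1 + ((0:ℕ):ℝ))..(c - N + 1 + ((N:ℕ):ℝ)), f x := by
        rw [← key]
        refine Finset.sum_congr rfl fun i _ => ?_
        congr 1 <;> push_cast <;> ring
    _ = ∫ x in (c - N + 1)..(c + 1), f x := by congr 1 <;> push_cast <;> ring

theorem stmt_15 (f : ℝ → ℝ) (hcont : Continuous f) (hsupp : HasCompactSupport f)
    (hpd : IsPosDefRFn f) (hf0 : f 0 = 1)
    (hneg : ∀ n : ℤ, n ≠ 0 → f n ≤ 0) :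
    ∫ x, f x ≤ 1 := by
  have hInt : Integrable f := hcont.integrable_of_hasCompactSupport hsupp
  set I : ℝ := ∫ x, |f x| with hIdef
  have hI0 : 0 ≤ I := integral_nonneg (fun x => abs_nonneg _)
  obtain ⟨r, hr⟩ : ∃ r, tsupport f ⊆ Metric.closedBall 0 r :=
    hsupp.isBounded.subset_closedBall 0
  set R : ℕ := ⌈r⌉₊ + 1 with hRdef
  have hrR : r ≤ (R:ℝ) := le_trans (Nat.le_ceil r) (by exact_mod_cast Nat.le_succ _)
  have hsub : Function.support f ⊆ Set.Icc (-(R:ℝ)) (R:ℝ) := by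
    intro x hx
    have h1 := hr (subset_tsupport f hx)
    rw [Metric.mem_closedBall, Real.dist_eq, sub_zero] at h1
    have h2 : |x| ≤ (R:ℝ) := le_trans h1 hrR
    rcases abs_le.mp h2 with ⟨ha, hb⟩
    exact ⟨ha, hb⟩
  have heq : ∀ a b : ℝ, a < -(R:ℝ) → (R:ℝ) ≤ b → (∫ x in a..b, f x) = ∫ x, f x := by
    intro a b ha hb
    apply intervalIntegral.integral_eq_integral_of_support_subset
    intro x hx
    rcases hsub hx with ⟨h1, h2⟩
    exact ⟨lt_of_lt_of_le ha h1, le_trans h2 hb⟩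
  have habs : ∀ a b : ℝ, a ≤ b → |∫ x in a..b, f x| ≤ I := by
    intro a b hab
    calc |∫ x in a..b, f x| ≤ ∫ x in a..b, |f x| :=
          intervalIntegral.abs_integral_le_integral_abs hab
      _ = ∫ x in Set.Ioc a b, |f x| := intervalIntegral.integral_of_le hab
      _ ≤ I := setIntegral_le_integral hInt.abs (Filter.Eventually.of_forall fun x => abs_nonneg _)
  have hIf : |∫ x, f x| ≤ I := by
    have h := norm_integral_le_integral_norm (μ := volume) f
    simpa [Real.norm_eq_abs] using h
  -- lower bound for shifted block sums
  have sumLB : ∀ (s : ℝ), 0 ≤ s → s ≤ 1 → ∀ N : ℕ, 2*R+2 ≤ N →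
      (N:ℝ) * (∫ x, f x) - (2*(R:ℝ)+1) * (2*I)
        ≤ ∑ j : Fin N, ∫ x in ((j:ℝ) + s - N)..((j:ℝ) + s), f x := by
    intro s hs0 hs1 N hN
    rw [Fin.sum_univ_eq_sum_range (fun j : ℕ => ∫ x in ((j:ℝ) + s - N)..((j:ℝ) + s), f x) N]
    set G : Finset ℕ := Finset.Ico R (N - R - 1) with hG
    have hGsub : G ⊆ Finset.range N := by
      intro t ht
      rw [hG, Finset.mem_Ico] at ht
      rw [Finset.mem_range]
      omega
    rw [← Finset.sum_sdiff hGsub]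
    have hGcard : G.card = N - 2*R - 1 := by
      rw [hG, Nat.card_Ico]; omega
    have hBcard : (Finset.range N \ G).card = 2*R + 1 := by
      rw [Finset.card_sdiff_of_subset hGsub, Finset.card_range, hGcard]; omega
    have hGval : ∀ j ∈ G, (∫ x in ((j:ℝ) + s - N)..((j:ℝ) + s), f x) = ∫ x, f x := by
      intro j hj
      rw [hG, Finset.mem_Ico] at hj
      apply heq
      · have h1 : j + R + 2 ≤ N := by omega
        have h2 : (j:ℝ) + R + 2 ≤ N := by exact_mod_cast h1
        linarith
      · have : (R:ℝ) ≤ j := by exact_mod_cast hj.1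
        linarith
    have hBval : ∀ j ∈ Finset.range N \ G, -I ≤ ∫ x in ((j:ℝ) + s - N)..((j:ℝ) + s), f x := by
      intro j hj
      have hab : (j:ℝ) + s - N ≤ (j:ℝ) + s := by
        have h1 : (0:ℝ) ≤ N := Nat.cast_nonneg N
        linarith
      have := habs _ _ hab
      linarith [(abs_le.mp this).1]
    have hBsum : ((2*R+1 : ℕ):ℝ) * (-I) ≤ ∑ j ∈ Finset.range N \ G,
        ∫ x in ((j:ℝ) + s - N)..((j:ℝ) + s), f x := by
      have := Finset.card_nsmul_le_sum (Finset.range N \ G)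
        (fun j => ∫ x in ((j:ℝ) + s - N)..((j:ℝ) + s), f x) (-I) hBval
      rwa [hBcard, nsmul_eq_mul] at this
    have hGsum : ∑ j ∈ G, (∫ x in ((j:ℝ) + s - N)..((j:ℝ) + s), f x)
        = ((N - 2*R - 1 : ℕ):ℝ) * ∫ x, f x := by
      rw [Finset.sum_congr rfl hGval, Finset.sum_const, hGcard, nsmul_eq_mul]
    rw [hGsum]
    have hcast : ((N - 2*R - 1 : ℕ):ℝ) = (N:ℝ) - 2*R - 1 := by
      rw [Nat.cast_sub (by omega), Nat.cast_sub (by omega)]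
      push_cast; ring
    have hmul : (2*(R:ℝ)+1) * (∫ x, f x) ≤ (2*(R:ℝ)+1) * I :=
      mul_le_mul_of_nonneg_left (le_trans (le_abs_self _) hIf) (by positivity)
    have h2 : ((2*R+1 : ℕ):ℝ) = 2*(R:ℝ)+1 := by push_cast; ring
    rw [h2] at hBsum
    rw [hcast]
    linarith [hBsum, hmul]
  -- main estimate
  have keyS : ∀ N : ℕ, 2*R+2 ≤ N →
      2*((N:ℝ) * (∫ x, f x) - (2*(R:ℝ)+1)*(2*I)) ≤ 2*(N:ℝ) := by
    intro N hN
    have h2 := pd_key2 f hcont hpd N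
    have hdiag := pd_diag f hf0 hneg N
    have hsplit : ∀ j k : Fin N, (∫ x in ((j:ℝ)-(k:ℝ)-1)..((j:ℝ)-(k:ℝ)+1), f x)
        = (∫ x in (((j:ℝ)-1) - (k:ℝ))..(((j:ℝ)-1) - (k:ℝ) + 1), f x)
          + ∫ x in ((j:ℝ) - (k:ℝ))..((j:ℝ) - (k:ℝ) + 1), f x := by
      intro j k
      have adj := intervalIntegral.integral_add_adjacent_intervals
        (a := (j:ℝ)-(k:ℝ)-1) (b := (j:ℝ)-(k:ℝ)) (c := (j:ℝ)-(k:ℝ)+1) (f := f) (μ := volume)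
        (hcont.intervalIntegrable _ _) (hcont.intervalIntegrable _ _)
      rw [← adj]
      congr 1
      congr 1 <;> ring
    have e1 : ∑ j : Fin N, ∑ k : Fin N, (∫ x in ((j:ℝ)-(k:ℝ)-1)..((j:ℝ)-(k:ℝ)+1), f x)
        = (∑ j : Fin N, ∫ x in ((j:ℝ) + 0 - N)..((j:ℝ) + 0), f x)
          + ∑ j : Fin N, ∫ x in ((j:ℝ) + 1 - N)..((j:ℝ) + 1), f x := by
      rw [← Finset.sum_add_distrib]
      refine Finset.sum_congr rfl fun j _ => ?_
      calc ∑ k : Fin N, (∫ x in ((j:ℝ)-(k:ℝ)-1)..((j:ℝ)-(k:ℝ)+1), f x)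
          = ∑ k : Fin N, ((∫ x in (((j:ℝ)-1) - (k:ℝ))..(((j:ℝ)-1) - (k:ℝ) + 1), f x)
              + ∫ x in ((j:ℝ) - (k:ℝ))..((j:ℝ) - (k:ℝ) + 1), f x) :=
            Finset.sum_congr rfl fun k _ => hsplit j k
        _ = (∑ k : Fin N, ∫ x in (((j:ℝ)-1) - (k:ℝ))..(((j:ℝ)-1) - (k:ℝ) + 1), f x)
              + ∑ k : Fin N, ∫ x in ((j:ℝ) - (k:ℝ))..((j:ℝ) - (k:ℝ) + 1), f x :=
            Finset.sum_add_distrib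
        _ = (∫ x in ((j:ℝ)-1 - N + 1)..((j:ℝ)-1+1), f x) + ∫ x in ((j:ℝ) - N + 1)..((j:ℝ)+1), f x := by
            rw [pd_tel f hcont ((j:ℝ)-1) N, pd_tel f hcont ((j:ℝ)) N]
        _ = (∫ x in ((j:ℝ) + 0 - N)..((j:ℝ) + 0), f x) + ∫ x in ((j:ℝ) + 1 - N)..((j:ℝ) + 1), f x := by
            congr 1 <;> (congr 1 <;> ring)
    have hsum1 := sumLB 0 le_rfl zero_le_one N hN
    have hsum2 := sumLB 1 zero_le_one le_rfl N hN
    have h3 : ∑ j : Fin N, ∑ k : Fin N, (∫ x in ((j:ℝ)-(k:ℝ)-1)..((j:ℝ)-(k:ℝ)+1), f x)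
        ≤ 2 * (N:ℝ) := by
      have expand : ∑ j : Fin N, ∑ k : Fin N,
          (2 * f ((j:ℝ) - (k:ℝ)) - ∫ x in ((j:ℝ) - (k:ℝ) - 1)..((j:ℝ) - (k:ℝ) + 1), f x)
          = 2 * (∑ j : Fin N, ∑ k : Fin N, f ((j:ℝ) - (k:ℝ)))
            - ∑ j : Fin N, ∑ k : Fin N, (∫ x in ((j:ℝ)-(k:ℝ)-1)..((j:ℝ)-(k:ℝ)+1), f x) := by
        simp only [Finset.sum_sub_distrib, Finset.mul_sum]
      rw [expand] at h2
      linarith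
    rw [e1] at h3
    linarith
  -- pass to the limit
  have hlim : Filter.Tendsto (fun N : ℕ => 1 + ((2*(R:ℝ)+1)*(2*I)) / N)
      Filter.atTop (nhds 1) := by
    have := (tendsto_const_div_atTop_nhds_zero_nat ((2*(R:ℝ)+1)*(2*I))).const_add 1
    simpa using this
  apply ge_of_tendsto hlim
  filter_upwards [Filter.eventually_ge_atTop (2*R+2)] with N hN
  have hkey := keyS N hN
  have hNpos : (0:ℝ) < N := by
    have : 0 < N := by omega
    exact_mod_cast this
  set C := (2*(R:ℝ)+1)*(2*I) with hC
  have h1 : (N:ℝ) * (∫ x, f x) ≤ N + C := by linarith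
  calc ∫ x, f x = ((N:ℝ) * (∫ x, f x)) / N := by field_simp
    _ ≤ ((N:ℝ) + C) / N := div_le_div_of_nonneg_right h1 hNpos.le
    _ = 1 + C / N := by field_simp
end

section
/- Let $G$ be a compact abelian group with normalized Haar measure $m_G(G) = 1$, let $\Omega \subset G$ with $0 \in \Omega$, and let $\Lambda \subset G$ be a finite set with $(\Lambda - \Lambda) \cap \Omega = \{0\}$. Then every continuous positive definite function $f : G \to \mathbb{R}$ with $f(0) = 1$ and $\{x : f(x) > 0\} \subset \Omega$ satisfies $\int_G f \, dm_G \le \frac{1}{\#\Lambda}$. -/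
open MeasureTheory Pointwise ComplexOrder

lemma aux_pd {G : Type*} [AddCommGroup G] {f : G → ℝ} (hpd : IsPosDefRFn f)
    {ι : Type*} [Fintype ι] (x : ι → G) (c : ι → ℂ) :
    0 ≤ ∑ n : ι, ∑ m : ι, c n * (starRingEnd ℂ) (c m) * (f (x n - x m) : ℂ) := by
  classical
  let e : Fin (Fintype.card ι) ≃ ι := (Fintype.equivFin ι).symm
  calc (0:ℂ) ≤ ∑ n : Fin (Fintype.card ι), ∑ m : Fin (Fintype.card ι),
        c (e n) * (starRingEnd ℂ) (c (e m)) * (f (x (e n) - x (e m)) : ℂ) := by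
        simpa [Function.comp] using hpd _ (x ∘ e) (c ∘ e)
    _ = ∑ n : Fin (Fintype.card ι), ∑ m : ι,
        c (e n) * (starRingEnd ℂ) (c m) * (f (x (e n) - x m) : ℂ) :=
      Finset.sum_congr rfl fun n _ =>
        e.sum_comp fun m => c (e n) * (starRingEnd ℂ) (c m) * (f (x (e n) - x m) : ℂ)
    _ = ∑ n : ι, ∑ m : ι, c n * (starRingEnd ℂ) (c m) * (f (x n - x m) : ℂ) :=
      e.sum_comp fun n => ∑ m : ι, c n * (starRingEnd ℂ) (c m) * (f (x n - x m) : ℂ)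

lemma aux_phi_le {G : Type*} [AddCommGroup G] {f : G → ℝ} (hpd : IsPosDefRFn f)
    (s : Finset G) (x : G) :
    ∑ a ∈ s, ∑ b ∈ s, f (x + a - b) ≤ ∑ a ∈ s, ∑ b ∈ s, f (0 + a - b) := by
  classical
  set Φ : G → ℝ := fun y => ∑ a ∈ s, ∑ b ∈ s, f (y + a - b) with hΦ
  have hsum : ∀ (y z : G) (w : ℂ),
      (∑ a : {a // a ∈ s}, ∑ b : {a // a ∈ s}, w * (f (y + ↑a - (z + ↑b)) : ℂ))
        = w * ((Φ (y - z) : ℝ) : ℂ) := by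
    intro y z w
    have hc : ((Φ (y - z) : ℝ) : ℂ) = ∑ a : {a // a ∈ s}, ∑ b : {a // a ∈ s},
        (f ((y - z) + ↑a - ↑b) : ℂ) := by
      rw [hΦ]
      push_cast
      rw [← Finset.sum_coe_sort s]
      refine Finset.sum_congr rfl fun a _ => ?_
      rw [← Finset.sum_coe_sort s]
    rw [hc, Finset.mul_sum]
    refine Finset.sum_congr rfl fun a _ => ?_
    rw [Finset.mul_sum]
    refine Finset.sum_congr rfl fun b _ => ?_
    congr 2
    abel_nf
  have key : ∀ t u : ℂ, (0:ℂ) ≤ (t * (starRingEnd ℂ) t + u * (starRingEnd ℂ) u) * ((Φ 0 : ℝ) : ℂ)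
      + t * (starRingEnd ℂ) u * ((Φ x : ℝ) : ℂ) + u * (starRingEnd ℂ) t * ((Φ (-x) : ℝ) : ℂ) := by
    intro t u
    have h := aux_pd hpd (ι := Bool × {a // a ∈ s})
      (fun p => (if p.1 then x else 0) + (p.2 : G)) (fun p => if p.1 then t else u)
    rw [Fintype.sum_prod_type] at h
    simp only [Fintype.sum_prod_type, Fintype.sum_bool, if_true, if_false,
      Bool.false_eq_true, Finset.sum_add_distrib] at h
    rw [hsum x x, hsum x 0, hsum 0 x, hsum 0 0] at h
    simp only [sub_self, sub_zero, zero_sub] at h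
    calc (0:ℂ) ≤ _ := h
      _ = _ := by ring
  have h1 : (0:ℂ) ≤ ((2 * Φ 0 - Φ x - Φ (-x) : ℝ) : ℂ) := by
    have := key 1 (-1)
    convert this using 1
    push_cast
    simp only [map_one, map_neg]
    ring
  rw [Complex.zero_le_real] at h1
  have h2 := key 1 Complex.I
  rw [Complex.le_def] at h2
  obtain ⟨-, him⟩ := h2
  simp [Complex.add_im, Complex.mul_im, Complex.conj_I] at him
  show Φ x ≤ Φ 0
  linarith

theorem stmt_18 {G : Type*} [AddCommGroup G] [TopologicalSpace G]
    [IsTopologicalAddGroup G] [CompactSpace G] [MeasurableSpace G] [BorelSpace G]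
    (μ : Measure G) [μ.IsAddHaarMeasure] (hμ : μ Set.univ = 1)
    (Ω : Set G) (h0Ω : (0 : G) ∈ Ω)
    (Λ : Set G) (hΛfin : Λ.Finite) (hpack : (Λ - Λ) ∩ Ω = {0})
    (f : G → ℝ) (hcont : Continuous f) (hpd : IsPosDefRFn f) (hf0 : f 0 = 1)
    (hsupp : {x : G | 0 < f x} ⊆ Ω) :
    ∫ x, f x ∂μ ≤ 1 / (Λ.ncard : ℝ) := by
  classical
  have : IsProbabilityMeasure μ := ⟨hμ⟩
  set s := hΛfin.toFinset with hs
  have hN : Λ.ncard = s.card := Set.ncard_eq_toFinset_card Λ hΛfin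
  -- Λ nonempty
  have h0 : (0:G) ∈ (Λ - Λ) ∩ Ω := by rw [hpack]; rfl
  obtain ⟨a0, ha0, b0, hb0, -⟩ := h0.1
  have hsne : s.Nonempty := ⟨a0, hΛfin.mem_toFinset.mpr ha0⟩
  have hcardpos : (0:ℝ) < s.card := by
    exact_mod_cast Finset.card_pos.mpr hsne
  -- integrability
  have hcs : HasCompactSupport f := HasCompactSupport.of_compactSpace f
  have hint : Integrable f μ := hcont.integrable_of_hasCompactSupport hcs
  have hint' : ∀ c : G, Integrable (fun x => f (x + c)) μ := fun c =>
    (hcont.comp (continuous_add_right c)).integrable_of_hasCompactSupport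
      (HasCompactSupport.of_compactSpace _)
  have hintΦ : Integrable (fun x => ∑ a ∈ s, ∑ b ∈ s, f (x + a - b)) μ := by
    apply integrable_finset_sum
    intro a _
    apply integrable_finset_sum
    intro b _
    simpa [add_sub_assoc] using hint' (a - b)
  -- ∫ Φ = card² ∫ f
  have hintegral : ∫ x, (∑ a ∈ s, ∑ b ∈ s, f (x + a - b)) ∂μ
      = (s.card : ℝ)^2 * ∫ x, f x ∂μ := by
    rw [integral_finset_sum _ (fun a _ => integrable_finset_sum _
      (fun b _ => by simpa [add_sub_assoc] using hint' (a - b)))]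
    have : ∀ a ∈ s, ∫ x, (∑ b ∈ s, f (x + a - b)) ∂μ = (s.card : ℝ) * ∫ x, f x ∂μ := by
      intro a _
      rw [integral_finset_sum _ (fun b _ => by simpa [add_sub_assoc] using hint' (a - b))]
      have : ∀ b ∈ s, ∫ x, f (x + a - b) ∂μ = ∫ x, f x ∂μ := by
        intro b _
        simp only [add_sub_assoc]
        exact integral_add_right_eq_self f (a - b)
      rw [Finset.sum_congr rfl this, Finset.sum_const, nsmul_eq_mul]
    rw [Finset.sum_congr rfl this, Finset.sum_const, nsmul_eq_mul]
    ring
  -- Φ 0 ≤ card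
  have hΦ0 : ∑ a ∈ s, ∑ b ∈ s, f (0 + a - b) ≤ (s.card : ℝ) := by
    have hb : ∀ a ∈ s, ∀ b ∈ s, f (0 + a - b) ≤ if a = b then 1 else 0 := by
      intro a ha b hb
      rw [zero_add]
      by_cases hab : a = b
      · simp [hab, hf0]
      · simp only [hab, if_false]
        by_contra hpos
        push_neg at hpos
        have hmem : a - b ∈ (Λ - Λ) ∩ Ω :=
          ⟨Set.sub_mem_sub (hΛfin.mem_toFinset.mp ha) (hΛfin.mem_toFinset.mp hb),
            hsupp hpos⟩
        rw [hpack] at hmem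
        exact hab (sub_eq_zero.mp hmem)
    calc ∑ a ∈ s, ∑ b ∈ s, f (0 + a - b)
        ≤ ∑ a ∈ s, ∑ b ∈ s, (if a = b then (1:ℝ) else 0) :=
          Finset.sum_le_sum fun a ha => Finset.sum_le_sum fun b hbb => hb a ha b hbb
      _ = (s.card : ℝ) := by
          simp [Finset.sum_ite_eq]
  -- ∫ Φ ≤ Φ 0
  have hbound : ∫ x, (∑ a ∈ s, ∑ b ∈ s, f (x + a - b)) ∂μ
      ≤ ∑ a ∈ s, ∑ b ∈ s, f (0 + a - b) := by
    calc ∫ x, (∑ a ∈ s, ∑ b ∈ s, f (x + a - b)) ∂μ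
        ≤ ∫ _x, (∑ a ∈ s, ∑ b ∈ s, f (0 + a - b)) ∂μ :=
          integral_mono hintΦ (integrable_const _) (fun x => aux_phi_le hpd s x)
      _ = ∑ a ∈ s, ∑ b ∈ s, f (0 + a - b) := by simp
  have hA : (s.card : ℝ)^2 * ∫ x, f x ∂μ ≤ (s.card : ℝ) := by
    rw [← hintegral]; exact hbound.trans hΦ0
  rw [hN]
  have h2 : ∫ x, f x ∂μ ≤ (s.card : ℝ) / (s.card : ℝ)^2 :=
    (le_div_iff₀ (by positivity)).mpr (by linarith)
  calc ∫ x, f x ∂μ ≤ (s.card : ℝ) / (s.card : ℝ)^2 := h2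
    _ = 1 / (s.card : ℝ) := by field_simp
end
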